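/- Let X, Y ∈ ℤ^{n×n} be symmetric, ζ, η ∈ ℤⁿ, and let Q be a rational orthogonal matrix with Q X Qᵀ = Y and Q ζ = η, of level ℓ. Let p be a prime with p ∣ ℓ and rank_p(W_{X,ζ}) = n−1. Suppose β, φ₁, φ₂ ∈ 𝔽_p[λ] satisfy gcd(φ₁, φ₂) = 1 and that the reduction modulo p of Φ_{X,ζ}(λ,t) = det(λI − X − t·ζζᵀ) equals β(λ)·(φ₁(λ) + t·φ₂(λ)) in 𝔽_p[λ,t]. Then β has exactly one root in 𝔽_p: there exists λ₀ ∈ 𝔽_p with β(λ₀) = 0, and every λ₁ ∈ 𝔽_p with β(λ₁) = 0 equals λ₀. -/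

import Mathlib

/-!
Write `A`, `u` for the reductions of `X`, `ζ` modulo `p`. Evaluating the factorisation, the
roots of `β` are exactly the eigenvalues `a` of `A` having an eigenvector orthogonal to `u`:
such an eigenvector kills `aI − A − t uuᵀ` for every `t`, and since `φ₁, φ₂` have no common
root this forces `β(a) = 0`; conversely, for a root `a` the kernels of `aI − A` and
`aI − A − uuᵀ` yield such an eigenvector by symmetry of `A`. All these eigenvectors lie in
`ker Wᵀ`, the vectors orthogonal to every `Aᵏu`. By Cayley–Hamilton and symmetry this space is
`A`-invariant, and `rank_p W = n − 1` makes it a line; so it is spanned by one eigenvector,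
whose eigenvalue is the only root of `β`.
-/

open Matrix Polynomial

/-- The walk matrix `[ζ, Xζ, X²ζ, …, X^{n−1}ζ]`: its `j`-th column is `X^j ζ`. -/
def walkMatrix {n : ℕ} {R : Type*} [CommRing R]
    (X : Matrix (Fin n) (Fin n) R) (ζ : Fin n → R) : Matrix (Fin n) (Fin n) R :=
  Matrix.of fun i j => ((X ^ (j : ℕ)) *ᵥ ζ) i

/-- `ℓ` is the level of the rational matrix `Q`: the least positive integer such that
`ℓ • Q` has integer entries. -/
def IsLevel {n : ℕ} (Q : Matrix (Fin n) (Fin n) ℚ) (ℓ : ℕ) : Prop :=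
  (0 < ℓ ∧ ∀ i j, ∃ z : ℤ, (ℓ : ℚ) * Q i j = (z : ℚ)) ∧
    ∀ m : ℕ, 0 < m → (∀ i j, ∃ z : ℤ, (m : ℚ) * Q i j = (z : ℚ)) → ℓ ≤ m

/-- The bivariate polynomial `Φ_{X,ζ}(λ,t) = det(λI − X − t·ζζᵀ)`, as an element of
`(ℤ[t])[λ]`: the outer variable is `λ` and the inner variable is `t`. -/
noncomputable def PhiPoly {n : ℕ} (X : Matrix (Fin n) (Fin n) ℤ) (ζ : Fin n → ℤ) :
    Polynomial (Polynomial ℤ) :=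
  ((Polynomial.X : Polynomial (Polynomial ℤ)) •
      (1 : Matrix (Fin n) (Fin n) (Polynomial (Polynomial ℤ)))
    - X.map (fun a => Polynomial.C (Polynomial.C a))
    - Polynomial.C (Polynomial.X : Polynomial ℤ) •
        (vecMulVec ζ ζ).map (fun a => Polynomial.C (Polynomial.C a))).det

namespace Matrix

variable {ι R : Type*} [Fintype ι] [CommRing R]

theorem IsSymm.mulVec_dotProduct {A : Matrix ι ι R} (hA : A.IsSymm) (v w : ι → R) :
    (A *ᵥ v) ⬝ᵥ w = v ⬝ᵥ (A *ᵥ w) := by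
  rw [dotProduct_mulVec, ← mulVec_transpose, hA]

variable [DecidableEq ι]

theorem dotProduct_pow_mulVec_eq_zero_of_forall_lt [Nontrivial R] {A : Matrix ι ι R}
    {u w : ι → R} (h : ∀ j < Fintype.card ι, w ⬝ᵥ (A ^ j *ᵥ u) = 0) (k : ℕ) :
    w ⬝ᵥ (A ^ k *ᵥ u) = 0 := by
  rcases isEmpty_or_nonempty ι with hι | hι
  · simp [dotProduct]
  have hdeg : (X ^ k %ₘ A.charpoly).natDegree < Fintype.card ι := by
    have hne : A.charpoly ≠ 1 := fun h1 =>
      Fintype.card_ne_zero (α := ι) (by simpa [h1] using A.charpoly_natDegree_eq_dim.symm)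
    simpa [charpoly_natDegree_eq_dim] using natDegree_modByMonic_lt _ A.charpoly_monic hne
  rw [pow_eq_aeval_mod_charpoly, aeval_eq_sum_range' hdeg, sum_mulVec, dotProduct_sum]
  exact Finset.sum_eq_zero fun j hj => by
    rw [smul_mulVec, dotProduct_smul, h j (Finset.mem_range.1 hj), smul_zero]

theorem IsSymm.mulVec_dotProduct_pow_mulVec_eq_zero {A : Matrix ι ι R} (hA : A.IsSymm)
    {u w : ι → R} (hw : ∀ k : ℕ, w ⬝ᵥ (A ^ k *ᵥ u) = 0) (k : ℕ) :
    (A *ᵥ w) ⬝ᵥ (A ^ k *ᵥ u) = 0 := by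
  rw [hA.mulVec_dotProduct, mulVec_mulVec, ← pow_succ', hw]

theorem IsSymm.dotProduct_pow_mulVec_eq_zero_of_mulVec_eq_smul {A : Matrix ι ι R}
    (hA : A.IsSymm) {u z : ι → R} {a : R} (hz : A *ᵥ z = a • z) (hzu : u ⬝ᵥ z = 0)
    (k : ℕ) : z ⬝ᵥ (A ^ k *ᵥ u) = 0 := by
  induction k with
  | zero => rw [pow_zero, one_mulVec, dotProduct_comm, hzu]
  | succ k ih =>
    rw [pow_succ', ← mulVec_mulVec, ← hA.mulVec_dotProduct, hz, smul_dotProduct, ih, smul_zero]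

theorem det_sub_smul_vecMulVec_eq_zero_of_mulVec_eq_smul [IsDomain R] {A : Matrix ι ι R}
    {u z : ι → R} {a : R} (hz0 : z ≠ 0) (hz : A *ᵥ z = a • z) (hzu : u ⬝ᵥ z = 0) (t : R) :
    (a • 1 - A - t • vecMulVec u u).det = 0 :=
  exists_mulVec_eq_zero_iff.1
    ⟨z, hz0, by simp [sub_mulVec, smul_mulVec, vecMulVec_mulVec, hz, hzu]⟩

theorem IsSymm.exists_eigenvector_orthogonal_of_det_eq_zero {K : Type*} [Field K]
    {A : Matrix ι ι K} (hA : A.IsSymm) {u : ι → K} {a : K}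
    (h₀ : (a • 1 - A).det = 0) (h₁ : (a • 1 - A - vecMulVec u u).det = 0) :
    ∃ z ≠ 0, A *ᵥ z = a • z ∧ u ⬝ᵥ z = 0 := by
  obtain ⟨x, hx0, hx⟩ := exists_mulVec_eq_zero_iff.2 h₀
  obtain ⟨y, hy0, hy⟩ := exists_mulVec_eq_zero_iff.2 h₁
  have hAx : A *ᵥ x = a • x := by
    rwa [sub_mulVec, smul_mulVec, one_mulVec, sub_eq_zero, eq_comm] at hx
  have hAy : A *ᵥ y = a • y - (u ⬝ᵥ y) • u := by
    rw [sub_mulVec, sub_mulVec, smul_mulVec, one_mulVec, vecMulVec_mulVec,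
      op_smul_eq_smul, sub_sub, sub_eq_zero] at hy
    rw [hy, add_sub_cancel_right]
  by_cases hxu : u ⬝ᵥ x = 0
  · exact ⟨x, hx0, hAx, hxu⟩
  by_cases hyu : u ⬝ᵥ y = 0
  · exact ⟨y, hy0, by rw [hAy, hyu, zero_smul, sub_zero], hyu⟩
  -- otherwise `(A x) ⬝ᵥ y = x ⬝ᵥ (A y)` reads `(u ⬝ᵥ y) (u ⬝ᵥ x) = 0`
  have hxy := hA.mulVec_dotProduct x y
  rw [hAx, hAy, smul_dotProduct, dotProduct_sub, dotProduct_smul, dotProduct_smul,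
    dotProduct_comm x u] at hxy
  simp only [smul_eq_mul] at hxy
  exact (mul_ne_zero hyu hxu (by linear_combination hxy)).elim

theorem IsSymm.isRoot_iff_exists_eigenvector_orthogonal {K : Type*} [Field K]
    {A : Matrix ι ι K} (hA : A.IsSymm) {u : ι → K} {β φ₁ φ₂ : K[X]} (hφ : IsCoprime φ₁ φ₂)
    (hdet : ∀ a t : K, (a • 1 - A - t • vecMulVec u u).det =
      β.eval a * (φ₁.eval a + t * φ₂.eval a)) (a : K) :
    β.IsRoot a ↔ ∃ z ≠ 0, A *ᵥ z = a • z ∧ u ⬝ᵥ z = 0 := by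
  refine ⟨fun ha => hA.exists_eigenvector_orthogonal_of_det_eq_zero ?_ ?_,
    fun ⟨z, hz0, hz, hzu⟩ => ?_⟩
  · simpa [ha.eq_zero] using hdet a 0
  · simpa [ha.eq_zero] using hdet a 1
  have h₀ := hdet a 0
  have h₁ := hdet a 1
  rw [det_sub_smul_vecMulVec_eq_zero_of_mulVec_eq_smul hz0 hz hzu] at h₀ h₁
  show β.eval a = 0
  by_contra hβ
  have hφ₁ : φ₁.eval a = 0 := by simpa [hβ] using h₀.symm
  have hφ₂ : φ₂.eval a = 0 := by simpa [hβ, hφ₁] using h₁.symm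
  have hcop := hφ.map (evalRingHom a)
  rw [coe_evalRingHom, hφ₁, hφ₂] at hcop
  exact not_isCoprime_zero_zero hcop

end Matrix

theorem walkMatrix_map {n : ℕ} {R S : Type*} [CommRing R] [CommRing S] (f : R →+* S)
    (A : Matrix (Fin n) (Fin n) R) (u : Fin n → R) :
    (walkMatrix A u).map f = walkMatrix (A.map f) (f ∘ u) := by
  ext i j
  simp [walkMatrix, RingHom.map_mulVec, ← Matrix.map_pow]

theorem transpose_walkMatrix_mulVec_eq_zero_iff {n : ℕ} {R : Type*} [CommRing R]
    [Nontrivial R] {A : Matrix (Fin n) (Fin n) R} {u w : Fin n → R} :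
    (walkMatrix A u)ᵀ *ᵥ w = 0 ↔ ∀ k : ℕ, w ⬝ᵥ (A ^ k *ᵥ u) = 0 := by
  have hcol : ∀ j : Fin n, ((walkMatrix A u)ᵀ *ᵥ w) j = w ⬝ᵥ (A ^ (j : ℕ) *ᵥ u) :=
    fun _ => dotProduct_comm _ _
  refine ⟨fun h => dotProduct_pow_mulVec_eq_zero_of_forall_lt fun j hj => ?_,
    fun h => funext fun j => (hcol j).trans (h j)⟩
  rw [Fintype.card_fin] at hj
  simpa [hcol] using congrFun h ⟨j, hj⟩

theorem existsUnique_eigenvalue_orthogonal_of_rank_walkMatrix {n : ℕ} {K : Type*} [Field K]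
    {A : Matrix (Fin n) (Fin n) K} (hA : A.IsSymm) {u : Fin n → K} (hn : 0 < n)
    (hrank : (walkMatrix A u).rank = n - 1) :
    ∃! a : K, ∃ z ≠ 0, A *ᵥ z = a • z ∧ u ⬝ᵥ z = 0 := by
  set N := LinearMap.ker (walkMatrix A u)ᵀ.mulVecLin
  have hmem : ∀ w, w ∈ N ↔ ∀ k : ℕ, w ⬝ᵥ (A ^ k *ᵥ u) = 0 := fun _ =>
    transpose_walkMatrix_mulVec_eq_zero_iff
  have hN : Module.finrank K N = 1 := by
    have := LinearMap.finrank_range_add_finrank_ker (walkMatrix A u)ᵀ.mulVecLin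
    rw [← rank, rank_transpose, hrank, Module.finrank_fin_fun] at this
    change n - 1 + Module.finrank K N = n at this
    omega
  obtain ⟨⟨v, hvN⟩, hv0, hspan⟩ := finrank_eq_one_iff'.1 hN
  have hv0 : v ≠ 0 := fun h => hv0 (Subtype.ext h)
  obtain ⟨a, ha⟩ := hspan
    ⟨A *ᵥ v, (hmem _).2 (hA.mulVec_dotProduct_pow_mulVec_eq_zero ((hmem v).1 hvN))⟩
  have hav : A *ᵥ v = a • v := (congrArg Subtype.val ha).symm
  refine ⟨a, ⟨v, hv0, hav, ?_⟩, fun b ⟨z, hz0, hz, hzu⟩ => ?_⟩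
  · simpa [dotProduct_comm] using (hmem v).1 hvN 0
  obtain ⟨d, hd⟩ := hspan
    ⟨z, (hmem z).2 (hA.dotProduct_pow_mulVec_eq_zero_of_mulVec_eq_smul hz hzu)⟩
  have hdz : d • v = z := congrArg Subtype.val hd
  refine smul_left_injective K hz0 (?_ : b • z = a • z)
  rw [← hz, ← hdz, mulVec_smul, hav, smul_comm]

theorem evalEval_map_phiPoly {n : ℕ} {R : Type*} [CommRing R] (X : Matrix (Fin n) (Fin n) ℤ)
    (ζ : Fin n → ℤ) (a t : R) :
    ((PhiPoly X ζ).map (mapRingHom (Int.castRingHom R))).evalEval t a =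
      (a • 1 - X.map (Int.cast : ℤ → R) -
        t • vecMulVec (fun i => (ζ i : R)) (fun i => (ζ i : R))).det := by
  rw [← coe_evalEvalRingHom, ← coe_mapRingHom, ← RingHom.comp_apply, PhiPoly, RingHom.map_det]
  congr 1
  ext i j
  simp [Matrix.one_apply, vecMulVec_apply, apply_ite]

theorem IsLevel.eq_one_of_dim_eq_zero {n : ℕ} {Q : Matrix (Fin n) (Fin n) ℚ} {ℓ : ℕ}
    (hℓ : IsLevel Q ℓ) (hn : n = 0) : ℓ = 1 := by
  subst hn
  exact le_antisymm (hℓ.2 1 one_pos fun i => i.elim0) hℓ.1.1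

theorem beta_has_exactly_one_root_general
    {n : ℕ} (X : Matrix (Fin n) (Fin n) ℤ) (ζ : Fin n → ℤ)
    (hXsymm : X.IsSymm)
    (Q : Matrix (Fin n) (Fin n) ℚ)
    (ℓ : ℕ) (hℓ : IsLevel Q ℓ)
    (p : ℕ) [Fact p.Prime] (hpℓ : p ∣ ℓ)
    (hrank : ((walkMatrix X ζ).map (Int.cast : ℤ → ZMod p)).rank = n - 1)
    (β φ₁ φ₂ : Polynomial (ZMod p)) (hgcd : IsCoprime φ₁ φ₂)
    (hdecomp : (PhiPoly X ζ).map (Polynomial.mapRingHom (Int.castRingHom (ZMod p))) =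
      β.map (Polynomial.C : ZMod p →+* Polynomial (ZMod p)) *
        (φ₁.map (Polynomial.C : ZMod p →+* Polynomial (ZMod p)) +
          Polynomial.C (Polynomial.X : Polynomial (ZMod p)) *
            φ₂.map (Polynomial.C : ZMod p →+* Polynomial (ZMod p)))) :
    ∃ lam₀ : ZMod p, β.IsRoot lam₀ ∧ ∀ lam₁ : ZMod p, β.IsRoot lam₁ → lam₁ = lam₀ := by
  have hn : 0 < n := Nat.pos_of_ne_zero fun h =>
    (Fact.out : p.Prime).one_lt.ne' (Nat.dvd_one.1 (hℓ.eq_one_of_dim_eq_zero h ▸ hpℓ))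
  set u : Fin n → ZMod p := fun i => (ζ i : ZMod p)
  have hA : (X.map (Int.cast : ℤ → ZMod p)).IsSymm := hXsymm.map _
  have hdet : ∀ a t : ZMod p,
      (a • 1 - X.map (Int.cast : ℤ → ZMod p) - t • vecMulVec u u).det =
        β.eval a * (φ₁.eval a + t * φ₂.eval a) := fun a t => by
    rw [← evalEval_map_phiPoly, hdecomp]
    simp [evalEval_map_C, evalEval_C]
  have hroot := hA.isRoot_iff_exists_eigenvector_orthogonal hgcd hdet
  obtain ⟨a, ha, huniq⟩ := existsUnique_eigenvalue_orthogonal_of_rank_walkMatrix hA hn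
    (u := u) (by convert hrank using 2; exact (walkMatrix_map (Int.castRingHom (ZMod p)) X ζ).symm)
  exact ⟨a, (hroot a).2 ha, fun b hb => huniq b ((hroot b).1 hb)⟩

/-- **Lemma.** Suppose `Q` is a rational orthogonal matrix with `Q X Qᵀ = Y`, `Q ζ = η`, of
level `ℓ`, `p ∣ ℓ`, `rank_p(W_{X,ζ}) = n − 1`, and `Φ_{X,ζ} ≡ β(λ)(φ₁(λ) + t φ₂(λ)) mod p`
with `gcd(φ₁, φ₂) = 1`. Then `β` has exactly one root in `𝔽_p`. -/
theorem beta_has_exactly_one_root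
    {n : ℕ} (X Y : Matrix (Fin n) (Fin n) ℤ) (ζ η : Fin n → ℤ)
    (hXsymm : X.IsSymm) (hYsymm : Y.IsSymm)
    (Q : Matrix (Fin n) (Fin n) ℚ)
    (hQ : Qᵀ * Q = 1)
    (hQX : Q * X.map (Int.cast : ℤ → ℚ) * Qᵀ = Y.map (Int.cast : ℤ → ℚ))
    (hQζ : Q *ᵥ (fun i => (ζ i : ℚ)) = fun i => (η i : ℚ))
    (ℓ : ℕ) (hℓ : IsLevel Q ℓ)
    (p : ℕ) (hp : p.Prime) [Fact p.Prime] (hpℓ : p ∣ ℓ)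
    (hrank : ((walkMatrix X ζ).map (Int.cast : ℤ → ZMod p)).rank = n - 1)
    (β φ₁ φ₂ : Polynomial (ZMod p)) (hgcd : IsCoprime φ₁ φ₂)
    (hdecomp : (PhiPoly X ζ).map (Polynomial.mapRingHom (Int.castRingHom (ZMod p))) =
      β.map (Polynomial.C : ZMod p →+* Polynomial (ZMod p)) *
        (φ₁.map (Polynomial.C : ZMod p →+* Polynomial (ZMod p)) +
          Polynomial.C (Polynomial.X : Polynomial (ZMod p)) *
            φ₂.map (Polynomial.C : ZMod p →+* Polynomial (ZMod p)))) :
    ∃ lam₀ : ZMod p, β.IsRoot lam₀ ∧ ∀ lam₁ : ZMod p, β.IsRoot lam₁ → lam₁ = lam₀ :=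
  beta_has_exactly_one_root_general X ζ hXsymm Q ℓ hℓ p hpℓ hrank β φ₁ φ₂ hgcd hdecomp
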